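/- arXiv:1807.11653 — 2 statements merged into one kernel-verified Lean document; each statement's English description precedes it below -/
import Mathlib

section
/- Let Y = ∂/∂y − 2x ∂/∂t. For u₀(x,y,t) = log((x²/a² + y²/b²)² + t²/(a²b²))/(4 log A), in Korányi ellipsoidal coordinates one has Y u₀ = −√(sin φ) cos(φ+θ) / (b r log A). -/
/-!
In Korányi coordinates `x²/a² + y²/b² = r² sin φ`, so the quartic gauge
`N⁴ = (x²/a² + y²/b²)² + t²/(a²b²)` equals `r⁴`, and
`Y N⁴ = 4 (x²/a² + y²/b²) y / b² − 4 x t / (a²b²) = −4 r³ √(sin φ) cos(φ + θ) / b`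
by the addition formula for the cosine. As `u₀ = log N⁴ / (4 log A)`, the chain rule gives
`Y u₀ = Y N⁴ / (4 r⁴ log A)`.
-/

open Real

noncomputable def koranyiGaugePow4 (a b : ℝ) (p : ℝ × ℝ × ℝ) : ℝ :=
  (p.1 ^ 2 / a ^ 2 + p.2.1 ^ 2 / b ^ 2) ^ 2 + p.2.2 ^ 2 / (a ^ 2 * b ^ 2)

noncomputable def heisenbergY (f : ℝ × ℝ × ℝ → ℝ) (p : ℝ × ℝ × ℝ) : ℝ :=
  deriv (fun s => f (p.1, p.2.1 + s, p.2.2)) 0 - 2 * p.1 * deriv (fun s => f (p.1, p.2.1, p.2.2 + s)) 0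

theorem heisenbergY_div_const (f : ℝ × ℝ × ℝ → ℝ) (c : ℝ) (p : ℝ × ℝ × ℝ) :
    heisenbergY (fun q => f q / c) p = heisenbergY f p / c := by
  simp only [heisenbergY, deriv_div_const]
  ring

theorem heisenbergY_log {f : ℝ × ℝ × ℝ → ℝ} {p : ℝ × ℝ × ℝ} {fy ft : ℝ}
    (hfy : HasDerivAt (fun s => f (p.1, p.2.1 + s, p.2.2)) fy 0)
    (hft : HasDerivAt (fun s => f (p.1, p.2.1, p.2.2 + s)) ft 0) (hp : f p ≠ 0) :
    heisenbergY (fun q => log (f q)) p = (fy - 2 * p.1 * ft) / f p := by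
  have hp' : ∀ {q : ℝ × ℝ × ℝ}, q = p → f q ≠ 0 := fun hq => hq ▸ hp
  rw [heisenbergY, (hfy.log (hp' (by simp))).deriv, (hft.log (hp' (by simp))).deriv]
  simp only [add_zero, Prod.mk.eta]
  ring

theorem hasDerivAt_koranyiGaugePow4_y (a b x y t : ℝ) :
    HasDerivAt (fun s => koranyiGaugePow4 a b (x, y + s, t))
      (4 * (x ^ 2 / a ^ 2 + y ^ 2 / b ^ 2) * y / b ^ 2) 0 := by
  have h := (((((hasDerivAt_id (0 : ℝ)).const_add y).pow 2).div_const (b ^ 2)).const_add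
    (x ^ 2 / a ^ 2)).pow 2 |>.add_const (t ^ 2 / (a ^ 2 * b ^ 2))
  refine h.congr_deriv ?_
  simp only [Nat.cast_ofNat, id_eq, Pi.pow_apply, add_zero, Nat.add_one_sub_one, pow_one, mul_one]
  ring

theorem hasDerivAt_koranyiGaugePow4_t (a b x y t : ℝ) :
    HasDerivAt (fun s => koranyiGaugePow4 a b (x, y, t + s)) (2 * t / (a ^ 2 * b ^ 2)) 0 := by
  have h := ((((hasDerivAt_id (0 : ℝ)).const_add t).pow 2).div_const (a ^ 2 * b ^ 2)).const_add
    ((x ^ 2 / a ^ 2 + y ^ 2 / b ^ 2) ^ 2)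
  exact h.congr_deriv (by simp)

section KoranyiCoordinates

variable {a b r φ θ x y t : ℝ}

theorem sq_div_add_sq_div_of_koranyi (ha : a ≠ 0) (hb : b ≠ 0) (hφ : 0 ≤ sin φ)
    (hx : x = a * r * √(sin φ) * cos θ) (hy : y = b * r * √(sin φ) * sin θ) :
    x ^ 2 / a ^ 2 + y ^ 2 / b ^ 2 = r ^ 2 * sin φ := by
  rw [hx, hy]
  field_simp
  linear_combination r ^ 2 * (cos θ ^ 2 + sin θ ^ 2) * sq_sqrt hφ
    + r ^ 2 * sin φ * sin_sq_add_cos_sq θ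

theorem koranyiGaugePow4_of_koranyi (ha : a ≠ 0) (hb : b ≠ 0) (hφ : 0 ≤ sin φ)
    (hx : x = a * r * √(sin φ) * cos θ) (hy : y = b * r * √(sin φ) * sin θ)
    (ht : t = a * b * r ^ 2 * cos φ) :
    koranyiGaugePow4 a b (x, y, t) = r ^ 4 := by
  rw [koranyiGaugePow4, sq_div_add_sq_div_of_koranyi ha hb hφ hx hy, ht]
  field_simp
  linear_combination r ^ 4 * sin_sq_add_cos_sq φ

theorem heisenbergY_koranyiGaugePow4_of_koranyi (ha : a ≠ 0) (hb : b ≠ 0) (hφ : 0 ≤ sin φ)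
    (hx : x = a * r * √(sin φ) * cos θ) (hy : y = b * r * √(sin φ) * sin θ)
    (ht : t = a * b * r ^ 2 * cos φ) :
    4 * (x ^ 2 / a ^ 2 + y ^ 2 / b ^ 2) * y / b ^ 2 - 2 * x * (2 * t / (a ^ 2 * b ^ 2))
      = -(4 * r ^ 3 * √(sin φ) * cos (φ + θ) / b) := by
  rw [sq_div_add_sq_div_of_koranyi ha hb hφ hx hy, cos_add, hx, hy, ht]
  field_simp
  ring

end KoranyiCoordinates

theorem stmt12_general (a b A r φ θ : ℝ) (ha : 0 < a) (hb : 0 < b)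
    (hr : 0 < r) (hφ : φ ∈ Set.Ioo 0 π)
    (u₀ : ℝ × ℝ × ℝ → ℝ)
    (hu : ∀ p : ℝ × ℝ × ℝ, u₀ p =
      Real.log ((p.1 ^ 2 / a ^ 2 + p.2.1 ^ 2 / b ^ 2) ^ 2 + p.2.2 ^ 2 / (a ^ 2 * b ^ 2)) /
        (4 * Real.log A))
    (x y t : ℝ)
    (hx : x = a * r * Real.sqrt (Real.sin φ) * Real.cos θ)
    (hy : y = b * r * Real.sqrt (Real.sin φ) * Real.sin θ)
    (ht : t = a * b * r ^ 2 * Real.cos φ) :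
    deriv (fun s => u₀ (x, y + s, t)) 0 - 2 * x * deriv (fun s => u₀ (x, y, t + s)) 0
      = -(Real.sqrt (Real.sin φ) * Real.cos (φ + θ)) / (b * r * Real.log A) := by
  have hsin : 0 ≤ sin φ := (sin_pos_of_pos_of_lt_pi hφ.1 hφ.2).le
  have hgauge := koranyiGaugePow4_of_koranyi ha.ne' hb.ne' hsin hx hy ht
  have hu' : u₀ = fun p => log (koranyiGaugePow4 a b p) / (4 * log A) := funext hu
  change heisenbergY u₀ (x, y, t) = _
  rw [hu', heisenbergY_div_const,
    heisenbergY_log (hasDerivAt_koranyiGaugePow4_y a b x y t)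
      (hasDerivAt_koranyiGaugePow4_t a b x y t) (by rw [hgauge]; positivity),
    heisenbergY_koranyiGaugePow4_of_koranyi ha.ne' hb.ne' hsin hx hy ht, hgauge]
  field_simp

/-- With `Y = ∂/∂y − 2x ∂/∂t`, in Korányi ellipsoidal coordinates
`Y u₀ = −√(sin φ) cos(φ+θ) / (b r log A)`. -/
theorem stmt12 (a b A r φ θ : ℝ) (ha : 0 < a) (hb : 0 < b) (hA : 1 < A)
    (hr : 0 < r) (hφ : φ ∈ Set.Ioo 0 π)
    (u₀ : ℝ × ℝ × ℝ → ℝ)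
    (hu : ∀ p : ℝ × ℝ × ℝ, u₀ p =
      Real.log ((p.1 ^ 2 / a ^ 2 + p.2.1 ^ 2 / b ^ 2) ^ 2 + p.2.2 ^ 2 / (a ^ 2 * b ^ 2)) /
        (4 * Real.log A))
    (x y t : ℝ)
    (hx : x = a * r * Real.sqrt (Real.sin φ) * Real.cos θ)
    (hy : y = b * r * Real.sqrt (Real.sin φ) * Real.sin θ)
    (ht : t = a * b * r ^ 2 * Real.cos φ) :
    deriv (fun s => u₀ (x, y + s, t)) 0 - 2 * x * deriv (fun s => u₀ (x, y, t + s)) 0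
      = -(Real.sqrt (Real.sin φ) * Real.cos (φ + θ)) / (b * r * Real.log A) :=
  stmt12_general a b A r φ θ ha hb hr hφ u₀ hu x y t hx hy ht
end

section
/- The squared horizontal gradient norm |∇ʰ u₀|² = (X u₀)² + (Y u₀)² of u₀ in Korányi ellipsoidal coordinates equals ( sin φ / (r² (log A)²) ) · ( sin²(φ+θ)/a² + cos²(φ+θ)/b² ). -/
open Real

/-!
In ellipsoidal coordinates `x²/a² + y²/b² = r² sin φ`, so the quartic Korányi gauge
`N = (x²/a² + y²/b²)² + t²/(a²b²)` equals `r⁴`.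
Since `u₀ = log N / (4 log A)`, it suffices to apply the horizontal fields to `log N`; there the
contributions of `∂ₓ` and `2y ∂ₜ` combine, by the addition formula, into
`X (log N) = 4 √(sin φ) sin (φ + θ) / (a r)`, and likewise
`Y (log N) = -4 √(sin φ) cos (φ + θ) / (b r)`.
-/

/-- `X = ∂ₓ + 2y ∂ₜ`, partial derivatives taken as `deriv` along coordinate lines. -/
noncomputable def heisX (f : ℝ × ℝ × ℝ → ℝ) (p : ℝ × ℝ × ℝ) : ℝ :=
  deriv (fun s => f (p.1 + s, p.2.1, p.2.2)) 0 +
    2 * p.2.1 * deriv (fun s => f (p.1, p.2.1, p.2.2 + s)) 0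

noncomputable def heisY (f : ℝ × ℝ × ℝ → ℝ) (p : ℝ × ℝ × ℝ) : ℝ :=
  deriv (fun s => f (p.1, p.2.1 + s, p.2.2)) 0 -
    2 * p.1 * deriv (fun s => f (p.1, p.2.1, p.2.2 + s)) 0

theorem heisX_div_const (f : ℝ × ℝ × ℝ → ℝ) (c : ℝ) (p : ℝ × ℝ × ℝ) :
    heisX (fun q => f q / c) p = heisX f p / c := by
  simp only [heisX, deriv_div_const]
  ring

theorem heisY_div_const (f : ℝ × ℝ × ℝ → ℝ) (c : ℝ) (p : ℝ × ℝ × ℝ) :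
    heisY (fun q => f q / c) p = heisY f p / c := by
  simp only [heisY, deriv_div_const]
  ring

noncomputable def koranyiQuartic (a b : ℝ) (p : ℝ × ℝ × ℝ) : ℝ :=
  (p.1 ^ 2 / a ^ 2 + p.2.1 ^ 2 / b ^ 2) ^ 2 + p.2.2 ^ 2 / (a ^ 2 * b ^ 2)

section KoranyiQuartic

variable (a b x y t : ℝ)

theorem hasDerivAt_koranyiQuartic_fst :
    HasDerivAt (fun s => koranyiQuartic a b (x + s, y, t))
      (4 * (x ^ 2 / a ^ 2 + y ^ 2 / b ^ 2) * x / a ^ 2) 0 := by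
  have h := (((((hasDerivAt_id (0 : ℝ)).const_add x).fun_pow 2).div_const (a ^ 2)).add_const
    (y ^ 2 / b ^ 2)).fun_pow 2 |>.add_const (t ^ 2 / (a ^ 2 * b ^ 2))
  exact h.congr_deriv (by simp only [id, add_zero]; ring)

theorem hasDerivAt_koranyiQuartic_snd :
    HasDerivAt (fun s => koranyiQuartic a b (x, y + s, t))
      (4 * (x ^ 2 / a ^ 2 + y ^ 2 / b ^ 2) * y / b ^ 2) 0 := by
  have h := (((((hasDerivAt_id (0 : ℝ)).const_add y).fun_pow 2).div_const (b ^ 2)).const_add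
    (x ^ 2 / a ^ 2)).fun_pow 2 |>.add_const (t ^ 2 / (a ^ 2 * b ^ 2))
  exact h.congr_deriv (by simp only [id, add_zero]; ring)

theorem hasDerivAt_koranyiQuartic_thd :
    HasDerivAt (fun s => koranyiQuartic a b (x, y, t + s)) (2 * t / (a ^ 2 * b ^ 2)) 0 := by
  have h := ((((hasDerivAt_id (0 : ℝ)).const_add t).fun_pow 2).div_const
    (a ^ 2 * b ^ 2)).const_add ((x ^ 2 / a ^ 2 + y ^ 2 / b ^ 2) ^ 2)
  exact h.congr_deriv (by simp only [id, add_zero]; ring)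

variable {a b x y t}

theorem deriv_log_koranyiQuartic_fst (hN : koranyiQuartic a b (x, y, t) ≠ 0) :
    deriv (fun s => log (koranyiQuartic a b (x + s, y, t))) 0 =
      4 * (x ^ 2 / a ^ 2 + y ^ 2 / b ^ 2) * x / a ^ 2 / koranyiQuartic a b (x, y, t) := by
  simpa using ((hasDerivAt_koranyiQuartic_fst a b x y t).log (by simpa using hN)).deriv

theorem deriv_log_koranyiQuartic_snd (hN : koranyiQuartic a b (x, y, t) ≠ 0) :
    deriv (fun s => log (koranyiQuartic a b (x, y + s, t))) 0 =
      4 * (x ^ 2 / a ^ 2 + y ^ 2 / b ^ 2) * y / b ^ 2 / koranyiQuartic a b (x, y, t) := by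
  simpa using ((hasDerivAt_koranyiQuartic_snd a b x y t).log (by simpa using hN)).deriv

theorem deriv_log_koranyiQuartic_thd (hN : koranyiQuartic a b (x, y, t) ≠ 0) :
    deriv (fun s => log (koranyiQuartic a b (x, y, t + s))) 0 =
      2 * t / (a ^ 2 * b ^ 2) / koranyiQuartic a b (x, y, t) := by
  simpa using ((hasDerivAt_koranyiQuartic_thd a b x y t).log (by simpa using hN)).deriv

theorem heisX_log_koranyiQuartic (hN : koranyiQuartic a b (x, y, t) ≠ 0) :
    heisX (fun p => log (koranyiQuartic a b p)) (x, y, t) =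
      (4 * (x ^ 2 / a ^ 2 + y ^ 2 / b ^ 2) * x / a ^ 2 + 4 * y * t / (a ^ 2 * b ^ 2)) /
        koranyiQuartic a b (x, y, t) := by
  rw [heisX]
  dsimp only
  rw [deriv_log_koranyiQuartic_fst hN, deriv_log_koranyiQuartic_thd hN]
  ring

theorem heisY_log_koranyiQuartic (hN : koranyiQuartic a b (x, y, t) ≠ 0) :
    heisY (fun p => log (koranyiQuartic a b p)) (x, y, t) =
      (4 * (x ^ 2 / a ^ 2 + y ^ 2 / b ^ 2) * y / b ^ 2 - 4 * x * t / (a ^ 2 * b ^ 2)) /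
        koranyiQuartic a b (x, y, t) := by
  rw [heisY]
  dsimp only
  rw [deriv_log_koranyiQuartic_snd hN, deriv_log_koranyiQuartic_thd hN]
  ring

end KoranyiQuartic

section Ellipsoidal

variable {a b r φ θ : ℝ}

theorem ellipsoidal_radial (ha : a ≠ 0) (hb : b ≠ 0) (hφ : 0 ≤ sin φ) :
    (a * r * √(sin φ) * cos θ) ^ 2 / a ^ 2 + (b * r * √(sin φ) * sin θ) ^ 2 / b ^ 2 =
      r ^ 2 * sin φ := by
  field_simp
  linear_combination
    r ^ 2 * (cos θ ^ 2 + sin θ ^ 2) * sq_sqrt hφ + r ^ 2 * sin φ * sin_sq_add_cos_sq θ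

theorem koranyiQuartic_ellipsoidal (ha : a ≠ 0) (hb : b ≠ 0) (hφ : 0 ≤ sin φ) :
    koranyiQuartic a b
      (a * r * √(sin φ) * cos θ, b * r * √(sin φ) * sin θ, a * b * r ^ 2 * cos φ) = r ^ 4 := by
  rw [koranyiQuartic, ellipsoidal_radial ha hb hφ]
  field_simp
  linear_combination r ^ 4 * sin_sq_add_cos_sq φ

theorem heisX_log_koranyiQuartic_ellipsoidal (ha : a ≠ 0) (hb : b ≠ 0) (hr : r ≠ 0)
    (hφ : 0 ≤ sin φ) :
    heisX (fun p => log (koranyiQuartic a b p))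
        (a * r * √(sin φ) * cos θ, b * r * √(sin φ) * sin θ, a * b * r ^ 2 * cos φ) =
      4 * √(sin φ) * sin (φ + θ) / (a * r) := by
  have hN := koranyiQuartic_ellipsoidal (r := r) (θ := θ) ha hb hφ
  rw [heisX_log_koranyiQuartic (by rw [hN]; positivity), hN, ellipsoidal_radial ha hb hφ, sin_add]
  have hu := sq_sqrt hφ
  generalize √(sin φ) = u at hu ⊢
  rw [← hu]
  field_simp

theorem heisY_log_koranyiQuartic_ellipsoidal (ha : a ≠ 0) (hb : b ≠ 0) (hr : r ≠ 0)
    (hφ : 0 ≤ sin φ) :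
    heisY (fun p => log (koranyiQuartic a b p))
        (a * r * √(sin φ) * cos θ, b * r * √(sin φ) * sin θ, a * b * r ^ 2 * cos φ) =
      -(4 * √(sin φ) * cos (φ + θ) / (b * r)) := by
  have hN := koranyiQuartic_ellipsoidal (r := r) (θ := θ) ha hb hφ
  rw [heisY_log_koranyiQuartic (by rw [hN]; positivity), hN, ellipsoidal_radial ha hb hφ, cos_add]
  have hu := sq_sqrt hφ
  generalize √(sin φ) = u at hu ⊢
  rw [← hu]
  field_simp
  ring

end Ellipsoidal

theorem stmt13_general (a b A r φ θ : ℝ) (ha : 0 < a) (hb : 0 < b)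
    (hr : 0 < r) (hφ : φ ∈ Set.Ioo 0 π)
    (u₀ : ℝ × ℝ × ℝ → ℝ)
    (hu : ∀ p : ℝ × ℝ × ℝ, u₀ p =
      Real.log ((p.1 ^ 2 / a ^ 2 + p.2.1 ^ 2 / b ^ 2) ^ 2 + p.2.2 ^ 2 / (a ^ 2 * b ^ 2)) /
        (4 * Real.log A))
    (x y t : ℝ)
    (hx : x = a * r * Real.sqrt (Real.sin φ) * Real.cos θ)
    (hy : y = b * r * Real.sqrt (Real.sin φ) * Real.sin θ)
    (ht : t = a * b * r ^ 2 * Real.cos φ) :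
    (deriv (fun s => u₀ (x + s, y, t)) 0 + 2 * y * deriv (fun s => u₀ (x, y, t + s)) 0) ^ 2 +
      (deriv (fun s => u₀ (x, y + s, t)) 0 - 2 * x * deriv (fun s => u₀ (x, y, t + s)) 0) ^ 2
      = Real.sin φ / (r ^ 2 * Real.log A ^ 2) *
          (Real.sin (φ + θ) ^ 2 / a ^ 2 + Real.cos (φ + θ) ^ 2 / b ^ 2) := by
  have hsin : 0 ≤ sin φ := (sin_pos_of_pos_of_lt_pi hφ.1 hφ.2).le
  have hu₀ : u₀ = fun p => log (koranyiQuartic a b p) / (4 * log A) := funext hu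
  change heisX u₀ (x, y, t) ^ 2 + heisY u₀ (x, y, t) ^ 2 = _
  subst hu₀ hx hy ht
  rw [heisX_div_const, heisY_div_const,
    heisX_log_koranyiQuartic_ellipsoidal ha.ne' hb.ne' hr.ne' hsin,
    heisY_log_koranyiQuartic_ellipsoidal ha.ne' hb.ne' hr.ne' hsin]
  have hu := sq_sqrt hsin
  generalize √(sin φ) = u at hu ⊢
  rw [← hu]
  ring

/-- The squared horizontal gradient norm `(Xu₀)² + (Yu₀)²` of `u₀` in Korányi
ellipsoidal coordinates equals `(sin φ/(r²(log A)²))(sin²(φ+θ)/a² + cos²(φ+θ)/b²)`. -/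
theorem stmt13 (a b A r φ θ : ℝ) (ha : 0 < a) (hb : 0 < b) (hA : 1 < A)
    (hr : 0 < r) (hφ : φ ∈ Set.Ioo 0 π)
    (u₀ : ℝ × ℝ × ℝ → ℝ)
    (hu : ∀ p : ℝ × ℝ × ℝ, u₀ p =
      Real.log ((p.1 ^ 2 / a ^ 2 + p.2.1 ^ 2 / b ^ 2) ^ 2 + p.2.2 ^ 2 / (a ^ 2 * b ^ 2)) /
        (4 * Real.log A))
    (x y t : ℝ)
    (hx : x = a * r * Real.sqrt (Real.sin φ) * Real.cos θ)
    (hy : y = b * r * Real.sqrt (Real.sin φ) * Real.sin θ)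
    (ht : t = a * b * r ^ 2 * Real.cos φ) :
    (deriv (fun s => u₀ (x + s, y, t)) 0 + 2 * y * deriv (fun s => u₀ (x, y, t + s)) 0) ^ 2 +
      (deriv (fun s => u₀ (x, y + s, t)) 0 - 2 * x * deriv (fun s => u₀ (x, y, t + s)) 0) ^ 2
      = Real.sin φ / (r ^ 2 * Real.log A ^ 2) *
          (Real.sin (φ + θ) ^ 2 / a ^ 2 + Real.cos (φ + θ) ^ 2 / b ^ 2) :=
  stmt13_general a b A r φ θ ha hb hr hφ u₀ hu x y t hx hy ht
end
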